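/- arXiv:1407.1773 — 3 statements merged into one kernel-verified Lean document; each statement's English description precedes it below -/
import Mathlib

section
/- Let c > 0 and a₁, …, a_r > 0 be real numbers. Then there exists ε > 0 and an infinite set of positive integers K such that for every k ∈ K and every i, either ‖kc‖_{a_i} = 0 or ‖kc‖_{a_i} > ε. Consequently, it is impossible that 0 < ‖kc‖_{a_i} < ε holds for all sufficiently large k and some choice of i = i(k). -/
/-!
`distA t a` is the norm of `t` in `AddCircle a`. In the compact group `∏ i, AddCircle (a i)` the
multiples `d • x` of `x = (c mod a i)ᵢ` return to any neighbourhood of `0` for infinitely many `d`.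
For such `d` and `k = d + 1` we have `‖k • xᵢ‖ ≥ ‖xᵢ‖ - ‖d • xᵢ‖`, so every coordinate with
`xᵢ ≠ 0` stays above half the smallest nonzero `‖xᵢ‖`, while `xᵢ = 0` forces `k • xᵢ = 0`.
-/

/-- distance from `t` to the nearest point of `aℤ` -/
noncomputable def distA (t a : ℝ) : ℝ := sInf {d : ℝ | ∃ m : ℤ, d = |t - m * a|}

theorem distA_eq_norm_coe {a : ℝ} (ha : 0 < a) (t : ℝ) : distA t a = ‖(t : AddCircle a)‖ := by
  have hround : ∀ m : ℤ, |t - m * a| = a * |a⁻¹ * t - m| := fun m => by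
    rw [← abs_of_pos ha, ← abs_mul, abs_of_pos ha, mul_sub, mul_inv_cancel_left₀ ha.ne', mul_comm]
  rw [AddCircle.norm_eq' a ha]
  refine le_antisymm (csInf_le ⟨0, fun _ ⟨_, h⟩ => h ▸ abs_nonneg _⟩ ⟨_, (hround _).symm⟩) ?_
  refine le_csInf ⟨_, 0, rfl⟩ ?_
  rintro _ ⟨m, rfl⟩
  rw [hround]
  exact mul_le_mul_of_nonneg_left (round_le _ m) ha.le

section CompactGroup

variable {G : Type*} [SeminormedAddCommGroup G] [CompactSpace G]

theorem exists_pos_nsmul_norm_lt (x : G) {δ : ℝ} (hδ : 0 < δ) : ∃ d : ℕ, 0 < d ∧ ‖d • x‖ < δ := by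
  obtain ⟨_, -, φ, hφ, hlim⟩ :=
    isCompact_univ.tendsto_subseq (x := fun n : ℕ => n • x) fun _ => Set.mem_univ _
  obtain ⟨N, hN⟩ := Metric.cauchySeq_iff'.1 hlim.cauchySeq δ hδ
  have hlt : φ N < φ (N + 1) := hφ N.lt_succ_self
  refine ⟨φ (N + 1) - φ N, Nat.sub_pos_of_lt hlt, ?_⟩
  rw [sub_nsmul x hlt.le, ← sub_eq_add_neg, ← dist_eq_norm]
  exact hN (N + 1) N.le_succ

theorem setOf_pos_nsmul_norm_lt_infinite (x : G) {δ : ℝ} (hδ : 0 < δ) :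
    {d : ℕ | 0 < d ∧ ‖d • x‖ < δ}.Infinite := by
  refine Set.infinite_of_forall_exists_gt fun M => ?_
  -- a return time of `(M + 1) • x` gives one of `x` that is a multiple of `M + 1`
  obtain ⟨d, hd, hnorm⟩ := exists_pos_nsmul_norm_lt ((M + 1) • x) hδ
  refine ⟨(M + 1) * d, ⟨by positivity, by rwa [mul_nsmul]⟩, ?_⟩
  nlinarith

end CompactGroup

open Filter Topology in
theorem exists_pos_forall_lt_of_pos {ι : Type*} [Finite ι] (f : ι → ℝ) :
    ∃ m > 0, ∀ i, 0 < f i → m < f i := by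
  have h : ∀ᶠ m in 𝓝[>] (0 : ℝ), ∀ i, 0 < f i → m < f i := by
    refine eventually_all.2 fun i => ?_
    by_cases hi : 0 < f i
    · exact ((eventually_lt_nhds hi).filter_mono nhdsWithin_le_nhds).mono fun _ h _ => h
    · exact .of_forall fun _ h => absurd h hi
  obtain ⟨m, hm, hpos⟩ := (h.and self_mem_nhdsWithin).exists
  exact ⟨m, hpos, hm⟩

section Gap

variable {ι : Type*} [Fintype ι] {G : ι → Type*} [∀ i, SeminormedAddCommGroup (G i)]
  [∀ i, CompactSpace (G i)]

theorem setOf_nsmul_norm_gap_infinite (x : ∀ i, G i) :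
    ∃ ε > 0, {k : ℕ | 0 < k ∧ ∀ i, ‖k • x i‖ = 0 ∨ ε < ‖k • x i‖}.Infinite := by
  obtain ⟨m, hm, hmx⟩ := exists_pos_forall_lt_of_pos fun i => ‖x i‖
  have hD := setOf_pos_nsmul_norm_lt_infinite x (half_pos hm)
  refine ⟨m / 2, half_pos hm, (hD.image (add_left_injective 1).injOn).mono ?_⟩
  rintro _ ⟨d, ⟨-, hd⟩, rfl⟩
  refine ⟨d.succ_pos, fun i => ?_⟩
  have hdi : ‖d • x i‖ < m / 2 := (norm_le_pi_norm (d • x) i).trans_lt hd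
  rcases (norm_nonneg (x i)).eq_or_lt with h0 | hpos
  · left
    exact le_antisymm (norm_nsmul_le.trans (by rw [← h0, mul_zero])) (norm_nonneg _)
  · right
    calc m / 2 < ‖x i‖ - ‖d • x i‖ := by linarith [hmx i hpos]
      _ ≤ ‖(d + 1) • x i‖ := by rw [succ_nsmul']; exact norm_sub_le_norm_add _ _

end Gap

theorem uniform_gap_infinitely_often_general (r : ℕ) (c : ℝ)
    (a : Fin r → ℝ) (ha : ∀ i, 0 < a i) :
    (∃ ε > 0, ∃ K : Set ℕ, K.Infinite ∧
        ∀ k ∈ K, 0 < k ∧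
          ∀ i, distA (k * c) (a i) = 0 ∨ ε < distA (k * c) (a i)) ∧
    ¬ (∀ ε > 0, ∃ N : ℕ, ∀ k ≥ N,
        ∃ i, 0 < distA (k * c) (a i) ∧ distA (k * c) (a i) < ε) := by
  have : ∀ i, Fact (0 < a i) := fun i => ⟨ha i⟩
  have hdist : ∀ (k : ℕ) i, distA (k * c) (a i) = ‖k • (c : AddCircle (a i))‖ := fun k i => by
    rw [distA_eq_norm_coe (ha i), ← nsmul_eq_mul, AddCircle.coe_nsmul]
  obtain ⟨ε, hε, hK⟩ := setOf_nsmul_norm_gap_infinite fun i => (c : AddCircle (a i))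
  simp only [← hdist] at hK
  refine ⟨⟨ε, hε, _, hK, fun k hk => hk⟩, fun h => ?_⟩
  obtain ⟨N, hN⟩ := h ε hε
  obtain ⟨k, ⟨-, hk⟩, hkN⟩ := hK.exists_gt N
  obtain ⟨i, hpos, hlt⟩ := hN k hkN.le
  rcases hk i with h0 | hgt
  · exact hpos.ne' h0
  · exact lt_asymm hlt hgt

/-- for finitely many periods `a i` there are `ε > 0` and an
infinite set `K` of positive integers such that for `k ∈ K` and every `i`
either `‖kc‖_{a i} = 0` or `‖kc‖_{a i} > ε`; consequently one cannot have
`0 < ‖kc‖_{a i(k)} < ε` for all sufficiently large `k`. -/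
theorem uniform_gap_infinitely_often (r : ℕ) (c : ℝ) (hc : 0 < c)
    (a : Fin r → ℝ) (ha : ∀ i, 0 < a i) :
    (∃ ε > 0, ∃ K : Set ℕ, K.Infinite ∧
        ∀ k ∈ K, 0 < k ∧
          ∀ i, distA (k * c) (a i) = 0 ∨ ε < distA (k * c) (a i)) ∧
    ¬ (∀ ε > 0, ∃ N : ℕ, ∀ k ≥ N,
        ∃ i, 0 < distA (k * c) (a i) ∧ distA (k * c) (a i) < ε) :=
  uniform_gap_infinitely_often_general r c a ha
end

section
/- Suppose a Reeb flow has finitely many simple closed orbits with actions a₁, …, a_r > 0, and let c > 0. Then it is impossible that for all sufficiently small ε > 0 and all sufficiently large k there exist i ∈ {1,…,r} and m ∈ ℕ with kc < m·a_i < kc + ε. -/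
/-- Simultaneous Dirichlet recurrence via pigeonhole: some positive multiple of
the vector `v` is within `1/n` of an integer vector, coordinatewise. -/
lemma dirichlet_simul (r : ℕ) (v : Fin r → ℝ) (n : ℕ) (hn : 0 < n) :
    ∃ k : ℕ, 0 < k ∧ ∃ z : Fin r → ℤ, ∀ i, |(k : ℝ) * v i - z i| < 1 / n := by
  have hfb : ∀ (k : ℕ) (i : Fin r), (⌊(n : ℝ) * Int.fract ((k : ℝ) * v i)⌋).toNat < n := by
    intro k i
    have h0 : (0:ℝ) ≤ (n : ℝ) * Int.fract ((k : ℝ) * v i) :=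
      mul_nonneg (by positivity) (Int.fract_nonneg _)
    have h1 : (n : ℝ) * Int.fract ((k : ℝ) * v i) < n := by
      have := Int.fract_lt_one ((k : ℝ) * v i)
      have hnR : (0:ℝ) < n := by exact_mod_cast hn
      nlinarith
    have : ⌊(n : ℝ) * Int.fract ((k : ℝ) * v i)⌋ < (n : ℤ) := by
      exact Int.floor_lt.mpr (by exact_mod_cast h1)
    omega
  set f : ℕ → (Fin r → Fin n) := fun k i =>
    ⟨(⌊(n : ℝ) * Int.fract ((k : ℝ) * v i)⌋).toNat, hfb k i⟩ with hf
  have hcard : (Finset.univ : Finset (Fin r → Fin n)).card * 1 <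
      (Finset.range (n ^ r + 1)).card := by
    simp [Finset.card_univ, Fintype.card_fun]
  obtain ⟨k₁, hk₁m, k₂, hk₂m, hne, heq⟩ :=
    Finset.exists_ne_map_eq_of_card_lt_of_maps_to
      (s := Finset.range (n ^ r + 1)) (t := (Finset.univ : Finset (Fin r → Fin n)))
      (by simpa using hcard) (fun x _ => Finset.mem_univ (f x))
  -- WLOG k₁ < k₂
  wlog hlt : k₁ < k₂ generalizing k₁ k₂
  · exact this k₂ hk₂m k₁ hk₁m hne.symm heq.symm (by omega)
  refine ⟨k₂ - k₁, by omega, fun i => ⌊(k₂ : ℝ) * v i⌋ - ⌊(k₁ : ℝ) * v i⌋, fun i => ?_⟩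
  have hfloor : ⌊(n : ℝ) * Int.fract ((k₁ : ℝ) * v i)⌋ = ⌊(n : ℝ) * Int.fract ((k₂ : ℝ) * v i)⌋ := by
    have := congrFun heq i
    have h1 : (0:ℤ) ≤ ⌊(n : ℝ) * Int.fract ((k₁ : ℝ) * v i)⌋ :=
      Int.floor_nonneg.mpr (mul_nonneg (by positivity) (Int.fract_nonneg _))
    have h2 : (0:ℤ) ≤ ⌊(n : ℝ) * Int.fract ((k₂ : ℝ) * v i)⌋ :=
      Int.floor_nonneg.mpr (mul_nonneg (by positivity) (Int.fract_nonneg _))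
    have := Fin.mk.injEq _ _ _ _ ▸ this
    omega
  have habs : |(n : ℝ) * Int.fract ((k₂ : ℝ) * v i) - (n : ℝ) * Int.fract ((k₁ : ℝ) * v i)| < 1 := by
    rw [abs_sub_lt_iff]
    constructor
    · have hlt1 := Int.lt_floor_add_one ((n : ℝ) * Int.fract ((k₂ : ℝ) * v i))
      have hle2 := Int.floor_le ((n : ℝ) * Int.fract ((k₁ : ℝ) * v i))
      rw [← hfloor] at hlt1
      linarith
    · have hlt1 := Int.lt_floor_add_one ((n : ℝ) * Int.fract ((k₁ : ℝ) * v i))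
      have hle2 := Int.floor_le ((n : ℝ) * Int.fract ((k₂ : ℝ) * v i))
      rw [hfloor] at hlt1
      linarith
  have hnR : (0:ℝ) < n := by exact_mod_cast hn
  have hkey : ((k₂ - k₁ : ℕ) : ℝ) * v i - ((⌊(k₂ : ℝ) * v i⌋ - ⌊(k₁ : ℝ) * v i⌋ : ℤ) : ℝ)
      = Int.fract ((k₂ : ℝ) * v i) - Int.fract ((k₁ : ℝ) * v i) := by
    have : ((k₂ - k₁ : ℕ) : ℝ) = (k₂ : ℝ) - (k₁ : ℝ) := by
      push_cast [Nat.cast_sub hlt.le]; ring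
    rw [this]
    unfold Int.fract
    push_cast
    ring
  rw [hkey]
  have heq2 : (n:ℝ) * Int.fract ((k₂ : ℝ) * v i) - (n : ℝ) * Int.fract ((k₁ : ℝ) * v i)
      = (n:ℝ) * (Int.fract ((k₂ : ℝ) * v i) - Int.fract ((k₁ : ℝ) * v i)) := by ring
  rw [heq2, abs_mul, abs_of_pos hnR] at habs
  exact (lt_div_iff₀' hnR).mpr habs

/-- it is impossible that for every `ε > 0` and all sufficiently
large `k` some positive multiple of some `a i` lies in `(kc, kc + ε)`. -/
theorem no_multiple_in_every_window (r : ℕ) (c : ℝ) (hc : 0 < c)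
    (a : Fin r → ℝ) (ha : ∀ i, 0 < a i) :
    ¬ (∀ ε > 0, ∃ K : ℕ, ∀ k : ℕ, K < k →
        ∃ i : Fin r, ∃ m : ℕ,
          (k : ℝ) * c < m * a i ∧ (m : ℝ) * a i < k * c + ε) := by
  intro h
  rcases Nat.eq_zero_or_pos r with hr | hr
  · obtain ⟨K, hK⟩ := h 1 one_pos
    obtain ⟨i, -⟩ := hK (K + 1) (by omega)
    exact absurd i.isLt (by omega)
  have hne : Nonempty (Fin r) := ⟨⟨0, hr⟩⟩
  set α : Fin r → ℝ := fun i => c / a i with hα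
  set β : Fin r → ℝ := fun i => Int.fract (α i) with hβ
  set g : Fin r → ℝ := fun i => if β i = 0 then 1 else min (β i) (1 - β i) with hg
  have hs : (Finset.univ : Finset (Fin r)).Nonempty := Finset.univ_nonempty
  set δ : ℝ := Finset.univ.inf' hs g with hδ
  have hgpos : ∀ i, 0 < g i := by
    intro i
    by_cases hb : β i = 0
    · simp [hg, hb]
    · have h0 : 0 < β i := lt_of_le_of_ne (Int.fract_nonneg _) (Ne.symm hb)
      have h1 : β i < 1 := Int.fract_lt_one _
      simp only [hg, if_neg hb, lt_min_iff]
      constructor <;> linarith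
  have hg1 : ∀ i, g i ≤ 1 := by
    intro i
    by_cases hb : β i = 0
    · simp [hg, hb]
    · have h0 : 0 ≤ β i := Int.fract_nonneg _
      simp only [hg, if_neg hb]
      exact le_trans (min_le_right _ _) (by linarith)
  have hδpos : 0 < δ := by
    rw [hδ, Finset.lt_inf'_iff]
    exact fun i _ => hgpos i
  have hδ1 : δ ≤ 1 := le_trans (Finset.inf'_le _ (Finset.mem_univ (Classical.arbitrary _))) (hg1 _)
  set A : ℝ := Finset.univ.inf' hs a with hA
  have hApos : 0 < A := by
    rw [hA, Finset.lt_inf'_iff]; exact fun i _ => ha i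
  have hAle : ∀ i, A ≤ a i := fun i => Finset.inf'_le _ (Finset.mem_univ i)
  set ε : ℝ := A * δ / 4 with hε
  have hεpos : 0 < ε := by positivity
  obtain ⟨K, hK⟩ := h ε hεpos
  obtain ⟨n, hnbig⟩ := exists_nat_gt (4 * (K + 1) / δ)
  have hnpos : 0 < n := by
    have h0 : (0:ℝ) < 4 * (K + 1) / δ := by positivity
    have : (0:ℝ) < (n:ℝ) := lt_trans h0 hnbig
    exact_mod_cast this
  obtain ⟨k₀, hk₀pos, z, hz⟩ := dirichlet_simul r α n hnpos
  set k : ℕ := (K + 1) * k₀ + 1 with hk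
  have hkK : K < k := by
    have : K + 1 ≤ (K + 1) * k₀ := Nat.le_mul_of_pos_right _ hk₀pos
    omega
  obtain ⟨i, m, h1, h2⟩ := hK k hkK
  have hai := ha i
  have hca : α i * a i = c := div_mul_cancel₀ c (ne_of_gt hai)
  set t : ℝ := (m : ℝ) - (k : ℝ) * α i with htdef
  have ht0 : 0 < t := by
    have : (k : ℝ) * (α i * a i) < (m : ℝ) * a i := by rw [hca]; exact h1
    nlinarith
  have htε : t < ε / a i := by
    have : (m : ℝ) * a i < (k : ℝ) * (α i * a i) + ε := by rw [hca]; exact h2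
    rw [lt_div_iff₀ hai]
    nlinarith
  have hεa : ε / a i ≤ δ / 4 := by
    rw [div_le_iff₀ hai, hε]
    nlinarith [hAle i]
  -- the approximation error
  have hnR : (0:ℝ) < n := by exact_mod_cast hnpos
  have hEbound : |((K + 1 : ℕ) : ℝ) * ((k₀ : ℝ) * α i - (z i : ℝ))| < δ / 4 := by
    rw [abs_mul, abs_of_nonneg (by positivity : (0:ℝ) ≤ ((K + 1 : ℕ) : ℝ))]
    have h1 := hz i
    have h2 : ((K + 1 : ℕ) : ℝ) * |(k₀ : ℝ) * α i - (z i : ℝ)| < ((K + 1 : ℕ) : ℝ) * (1 / n) :=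
      mul_lt_mul_of_pos_left h1 (by positivity)
    have h3 : ((K + 1 : ℕ) : ℝ) * (1 / n) < δ / 4 := by
      rw [div_lt_iff₀ hδpos] at hnbig
      rw [mul_one_div, div_lt_div_iff₀ hnR (by norm_num : (0:ℝ) < 4)]
      push_cast
      nlinarith
    linarith
  have hkcast : (k : ℝ) = ((K + 1 : ℕ) : ℝ) * (k₀ : ℝ) + 1 := by
    rw [hk]; push_cast; ring
  by_cases hb : β i = 0
  · -- α i is an integer
    have hαint : α i = (⌊α i⌋ : ℝ) := by
      have : Int.fract (α i) = 0 := hb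
      unfold Int.fract at this; linarith
    set T : ℤ := (m : ℤ) - ((K + 1 : ℕ) : ℤ) * (k₀ : ℤ) * ⌊α i⌋ - ⌊α i⌋ with hT
    have hTt : (T : ℝ) = t := by
      rw [hT, htdef, hkcast]
      push_cast
      linear_combination (((K:ℝ) + 1) * (k₀:ℝ) + 1) * hαint
    have hT0 : 0 < T := by
      have : (0:ℝ) < (T : ℝ) := by rw [hTt]; exact ht0
      exact_mod_cast this
    have h1T : (1:ℝ) ≤ (T : ℝ) := by exact_mod_cast hT0
    have : t < 1 := by
      have := hεa
      linarith [htε, hδ1]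
    linarith [hTt ▸ h1T]
  · -- α i is not an integer
    have hgi : g i = min (β i) (1 - β i) := by
      simp only [hg]
      simp [hb]
    have hδgi : δ ≤ min (β i) (1 - β i) := hgi ▸ Finset.inf'_le g (Finset.mem_univ i)

    have hδβ : δ ≤ β i := le_trans hδgi (min_le_left _ _)
    have hδβ' : δ ≤ 1 - β i := le_trans hδgi (min_le_right _ _)
    set E : ℝ := ((K + 1 : ℕ) : ℝ) * ((k₀ : ℝ) * α i - (z i : ℝ)) with hE
    set T : ℤ := (m : ℤ) - ((K + 1 : ℕ) : ℤ) * z i - ⌊α i⌋ with hT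
    have hfr : α i = (⌊α i⌋ : ℝ) + β i := by
      rw [hβ]; unfold Int.fract; ring
    have hTval : (T : ℝ) = E + β i + t := by
      rw [hT, htdef, hkcast, hE]
      push_cast
      linear_combination hfr
    have habsE := abs_lt.mp hEbound
    have hlow : (0:ℝ) < (T : ℝ) := by
      rw [hTval]
      linarith [habsE.1, ht0, hδβ, hδpos]
    have hhigh : (T : ℝ) < 1 := by
      rw [hTval]
      have ht4 : t < δ / 4 := lt_of_lt_of_le htε hεa
      linarith [habsE.2, hδβ']
    have hT0 : 0 < T := by exact_mod_cast hlow
    have : (1:ℝ) ≤ (T : ℝ) := by exact_mod_cast hT0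
    linarith
end

section
/- Let r ∈ ℕ, c > 0, and a₁,…,a_r > 0. Then it is not the case that for every ε > 0 there exists K such that for all k > K there exist i and m_k ∈ ℕ with kc < m_k a_i < kc + ε; i.e., there exists ε > 0 such that for infinitely many k, no i and m ∈ ℕ satisfy kc < m a_i < kc + ε. -/
/-- distance from `x` to the two nearest integers bounds `|x - n|` for any integer `n`. -/
lemma min_fract_le_abs (x : ℝ) (n : ℤ) :
    min (Int.fract x) (1 - Int.fract x) ≤ |x - n| := by
  have h1 : (⌊x⌋ : ℝ) + Int.fract x = x := Int.floor_add_fract x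
  rcases le_or_gt n ⌊x⌋ with h | h
  · have h2 : (n : ℝ) ≤ (⌊x⌋ : ℝ) := by exact_mod_cast h
    calc min (Int.fract x) (1 - Int.fract x) ≤ Int.fract x := min_le_left _ _
      _ ≤ x - n := by linarith
      _ ≤ |x - n| := le_abs_self _
  · have h2 : (⌊x⌋ : ℝ) + 1 ≤ (n : ℝ) := by exact_mod_cast h
    calc min (Int.fract x) (1 - Int.fract x) ≤ 1 - Int.fract x := min_le_right _ _
      _ ≤ n - x := by linarith
      _ ≤ |x - n| := by rw [abs_sub_comm]; exact le_abs_self _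

/-- For any real `θ` and any bound `R ≥ 1`, there is `δ > 0` such that two
integers whose multiples of `θ` both have fractional part `> 1 - δ` cannot be
within distance `R` of each other. -/
lemma sep_exists (θ : ℝ) (R : ℕ) (hR : 0 < R) :
    ∃ δ > 0, ∀ k k' : ℕ, k < k' → k' ≤ k + R →
      1 - δ < Int.fract ((k : ℝ) * θ) → 1 - δ < Int.fract ((k' : ℝ) * θ) → False := by
  by_cases hirr : Irrational θ
  · set T : Finset ℕ := Finset.Icc 1 R with hT
    have hTne : T.Nonempty := ⟨1, by rw [hT]; exact Finset.mem_Icc.mpr ⟨le_refl 1, hR⟩⟩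
    set g : ℕ → ℝ := fun d => min (Int.fract ((d : ℝ) * θ)) (1 - Int.fract ((d : ℝ) * θ))
      with hg
    have hgpos : ∀ d ∈ T, 0 < g d := by
      intro d hd
      rw [hT, Finset.mem_Icc] at hd
      have hdθ : Irrational ((d : ℝ) * θ) := hirr.natCast_mul (by omega)
      refine lt_min ?_ ?_
      · rcases (Int.fract_nonneg ((d : ℝ) * θ)).lt_or_eq with h | h
        · exact h
        · exfalso
          have : (d : ℝ) * θ = (⌊(d : ℝ) * θ⌋ : ℝ) := by
            have := Int.floor_add_fract ((d : ℝ) * θ); rw [← h] at this; linarith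
          exact hdθ.ne_int _ this
      · linarith [Int.fract_lt_one ((d : ℝ) * θ)]
    refine ⟨T.inf' hTne g, (Finset.lt_inf'_iff hTne).mpr hgpos, ?_⟩
    intro k k' hlt hle hb hb'
    set δ := T.inf' hTne g with hδ
    have hdT : k' - k ∈ T := by rw [hT, Finset.mem_Icc]; omega
    have hmin := min_fract_le_abs (((k' - k : ℕ) : ℝ) * θ) (⌊(k' : ℝ) * θ⌋ - ⌊(k : ℝ) * θ⌋)
    have hcast : ((k' - k : ℕ) : ℝ) = (k' : ℝ) - k := by
      push_cast [Nat.cast_sub hlt.le]; ring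
    have heq : ((k' - k : ℕ) : ℝ) * θ - ((⌊(k' : ℝ) * θ⌋ - ⌊(k : ℝ) * θ⌋ : ℤ) : ℝ)
        = Int.fract ((k' : ℝ) * θ) - Int.fract ((k : ℝ) * θ) := by
      rw [hcast]
      simp only [Int.fract]
      push_cast
      ring
    have h1 := Int.fract_lt_one ((k : ℝ) * θ)
    have h1' := Int.fract_lt_one ((k' : ℝ) * θ)
    have habs : |((k' - k : ℕ) : ℝ) * θ - ((⌊(k' : ℝ) * θ⌋ - ⌊(k : ℝ) * θ⌋ : ℤ) : ℝ)| < δ := by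
      rw [heq]
      rw [abs_lt]
      constructor <;> linarith
    have hinf : δ ≤ g (k' - k) := Finset.inf'_le g hdT
    rw [hg] at hinf
    simp only at hinf
    linarith [hmin]
  · obtain ⟨q, hq⟩ := not_not.mp hirr
    have hden : (0 : ℝ) < (q.den : ℝ) := by exact_mod_cast q.pos
    refine ⟨1 / (q.den : ℝ), by positivity, ?_⟩
    intro k k' _ _ hb _
    have hkθ : (k : ℝ) * θ = ((k * q.num : ℤ) : ℝ) / ((q.den : ℕ) : ℝ) := by
      rw [← hq, Rat.cast_def]
      push_cast
      ring
    rw [hkθ, Int.fract_div_intCast_eq_div_intCast_mod] at hb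
    have hdenZ : (0 : ℤ) < (q.den : ℤ) := by exact_mod_cast q.pos
    have hmod : ((k : ℤ) * q.num) % (q.den : ℤ) ≤ (q.den : ℤ) - 1 := by
      have := Int.emod_lt_of_pos ((k : ℤ) * q.num) hdenZ; omega
    have hmodR : ((((k : ℤ) * q.num) % (q.den : ℤ) : ℤ) : ℝ) ≤ (q.den : ℝ) - 1 := by
      exact_mod_cast hmod
    rw [lt_div_iff₀ hden] at hb
    have hone : 1 / (q.den : ℝ) * (q.den : ℝ) = 1 := by field_simp
    push_cast at hb hmodR
    nlinarith

/-- full contradiction argument: there is `ε > 0` such that for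
infinitely many `k` no `i` and `m` satisfy `kc < m·a_i < kc + ε`; hence the
hypothesis of Corollary cor:sdm is false. -/
theorem full_contradiction (r : ℕ) (c : ℝ) (hc : 0 < c)
    (a : Fin r → ℝ) (ha : ∀ i, 0 < a i) :
    ∃ ε > 0,
      {k : ℕ | 0 < k ∧ ∀ i : Fin r, ∀ m : ℕ,
        ¬ ((k : ℝ) * c < m * a i ∧ (m : ℝ) * a i < k * c + ε)}.Infinite := by
  rcases Nat.eq_zero_or_pos r with hr | hr
  · subst hr
    refine ⟨1, one_pos, ?_⟩
    apply Set.infinite_of_not_bddAbove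
    rintro ⟨b, hb⟩
    have hmem : b + 1 ∈ {k : ℕ | 0 < k ∧ ∀ i : Fin 0, ∀ m : ℕ,
        ¬ ((k : ℝ) * c < m * a i ∧ (m : ℝ) * a i < k * c + 1)} :=
      ⟨by omega, fun i => i.elim0⟩
    have := hb hmem
    omega
  · have key : ∀ i : Fin r, ∃ δ > 0, ∀ k k' : ℕ, k < k' → k' ≤ k + 2 * r →
        1 - δ < Int.fract ((k : ℝ) * (c / a i)) →
        1 - δ < Int.fract ((k' : ℝ) * (c / a i)) → False :=
      fun i => sep_exists (c / a i) (2 * r) (by omega)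
    choose δ hδpos hsep using key
    have hne : (Finset.univ : Finset (Fin r)).Nonempty := ⟨⟨0, hr⟩, Finset.mem_univ _⟩
    set δ₀ : ℝ := Finset.univ.inf' hne δ with hδ₀
    have hδ₀pos : 0 < δ₀ := (Finset.lt_inf'_iff hne).mpr fun i _ => hδpos i
    set amin : ℝ := Finset.univ.inf' hne a with hamin
    have haminpos : 0 < amin := (Finset.lt_inf'_iff hne).mpr fun i _ => ha i
    refine ⟨δ₀ * amin, by positivity, ?_⟩
    apply Set.infinite_of_not_bddAbove
    rintro ⟨N, hN⟩
    set W : Finset ℕ := Finset.Ioc N (N + 4 * r * r) with hW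
    set B : Fin r → Finset ℕ :=
      fun i => W.filter (fun k => 1 - δ i < Int.fract ((k : ℝ) * (c / a i))) with hB
    -- each bad set is small
    have hBcard : ∀ i, (B i).card ≤ 2 * r := by
      intro i
      have step : ∀ k k', k ∈ B i → k' ∈ B i → k < k' →
          (k - (N + 1)) / (2 * r) < (k' - (N + 1)) / (2 * r) := by
        intro k k' hk hk' hlt
        rw [hB] at hk hk'
        simp only [Finset.mem_filter, hW, Finset.mem_Ioc] at hk hk'
        have hfar : ¬ (k' ≤ k + 2 * r) := fun hle => hsep i k k' hlt hle hk.2 hk'.2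
        have h1 : k - (N + 1) + 2 * r ≤ k' - (N + 1) := by omega
        have h2 : (k - (N + 1) + 2 * r) / (2 * r) ≤ (k' - (N + 1)) / (2 * r) :=
          Nat.div_le_div_right h1
        rw [Nat.add_div_right _ (by omega : 0 < 2 * r)] at h2
        omega
      have hmaps : ∀ k ∈ B i, (k - (N + 1)) / (2 * r) ∈ Finset.range (2 * r) := by
        intro k hk
        rw [hB] at hk
        simp only [Finset.mem_filter, hW, Finset.mem_Ioc] at hk
        rw [Finset.mem_range]
        rw [Nat.div_lt_iff_lt_mul (by omega : 0 < 2 * r)]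
        have h4 : 2 * r * (2 * r) = 4 * r * r := by ring
        omega
      have hinj : Set.InjOn (fun k => (k - (N + 1)) / (2 * r)) (B i) := by
        intro k hk k' hk' hf
        simp only at hf
        rcases Nat.lt_trichotomy k k' with h | h | h
        · exact absurd hf (Nat.ne_of_lt (step k k' hk hk' h))
        · exact h
        · exact absurd hf.symm (Nat.ne_of_lt (step k' k hk' hk h))
      calc (B i).card ≤ (Finset.range (2 * r)).card :=
            Finset.card_le_card_of_injOn _ hmaps hinj
        _ = 2 * r := Finset.card_range _
    -- hence a good k exists in the window
    obtain ⟨k, hkW, hkB⟩ : ∃ k ∈ W, k ∉ Finset.univ.biUnion B := by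
      by_contra h
      push_neg at h
      have hsub : W ⊆ Finset.univ.biUnion B := fun k hk => h k hk
      have h1 : W.card ≤ (Finset.univ.biUnion B).card := Finset.card_le_card hsub
      have h2 : (Finset.univ.biUnion B).card ≤ ∑ i, (B i).card :=
        Finset.card_biUnion_le
      have h3 : ∑ i, (B i).card ≤ r * (2 * r) := by
        calc ∑ i, (B i).card ≤ ∑ _i : Fin r, 2 * r :=
              Finset.sum_le_sum fun i _ => hBcard i
          _ = r * (2 * r) := by simp [Finset.sum_const, mul_comm]
      have h4 : W.card = 4 * r * r := by
        rw [hW, Nat.card_Ioc]; omega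
      nlinarith
    have hkIoc : N < k ∧ k ≤ N + 4 * r * r := by
      rw [hW, Finset.mem_Ioc] at hkW; exact hkW
    have hgood : ∀ i, Int.fract ((k : ℝ) * (c / a i)) ≤ 1 - δ i := by
      intro i
      by_contra h
      push_neg at h
      exact hkB (Finset.mem_biUnion.mpr ⟨i, Finset.mem_univ _,
        by rw [hB]; exact Finset.mem_filter.mpr ⟨hkW, h⟩⟩)
    have hkS : k ∈ {k : ℕ | 0 < k ∧ ∀ i : Fin r, ∀ m : ℕ,
        ¬ ((k : ℝ) * c < m * a i ∧ (m : ℝ) * a i < k * c + δ₀ * amin)} := by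
      refine ⟨by omega, ?_⟩
      rintro i m ⟨h1, h2⟩
      have hai := ha i
      have hθ : (k : ℝ) * (c / a i) = (k : ℝ) * c / a i := by ring
      have hm : (k : ℝ) * c / a i < m := (div_lt_iff₀ hai).mpr h1
      have hfl : (⌊(k : ℝ) * (c / a i)⌋ : ℝ) < m :=
        lt_of_le_of_lt (Int.floor_le _) (by rw [hθ]; exact hm)
      have hflZ : ⌊(k : ℝ) * (c / a i)⌋ < (m : ℤ) := by exact_mod_cast hfl
      have hm2 : (⌊(k : ℝ) * (c / a i)⌋ : ℝ) + 1 ≤ m := by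
        have : ⌊(k : ℝ) * (c / a i)⌋ + 1 ≤ (m : ℤ) := hflZ
        exact_mod_cast this
      have hfr : (k : ℝ) * (c / a i) - ⌊(k : ℝ) * (c / a i)⌋ ≤ 1 - δ i := by
        have := hgood i
        rwa [Int.fract] at this
      have hmθ : (k : ℝ) * (c / a i) + δ i ≤ m := by linarith
      have hmul := mul_le_mul_of_nonneg_right hmθ hai.le
      have hkc : ((k : ℝ) * (c / a i)) * a i = (k : ℝ) * c := by
        field_simp
      rw [add_mul, hkc] at hmul
      have h3 : δ₀ * amin ≤ δ i * a i :=
        mul_le_mul (Finset.inf'_le δ (Finset.mem_univ i))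
          (Finset.inf'_le a (Finset.mem_univ i)) haminpos.le (hδpos i).le
      linarith
    have := hN hkS
    omega
end
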